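/- Let m ≥ 1, t > 0 and h ∈ ℝ^m, and set w = |h|/(2√t). Then ∫_{ℝ^m} |K_t(x + h) - K_t(x)| dx = π^{-1/2} ∫_{-∞}^{∞} |e^{-(s + w/2)²} - e^{-(s - w/2)²}| ds, where K_t(x) = (4πt)^{-m/2} e^{-|x|²/(4t)}. -/

import Mathlib

/-!
The integrand is invariant under orthogonal maps, so a reflection moves `h` to `‖h‖ e₀`.
The heat kernel factors as a product of one-dimensional Gaussians of total mass one, so by
Fubini only the coordinate along `e₀` survives. The substitution `x = 2√t (s - w/2)` turns the
remaining one-dimensional integral into the stated one, the Jacobian `2√t` combining with the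
normalisation `(4πt)^{-1/2}` into `π^{-1/2}`.
-/

open MeasureTheory

/-- The Gaussian heat kernel `K_t(x) = (4πt)^{-m/2} e^{-|x|²/(4t)}` on `ℝ^m`. -/
noncomputable def heatKernel (m : ℕ) (t : ℝ) (x : EuclideanSpace ℝ (Fin m)) : ℝ :=
  (4 * Real.pi * t) ^ (-(m : ℝ) / 2) * Real.exp (-‖x‖ ^ 2 / (4 * t))

open Real

noncomputable def heatKernelReal (t s : ℝ) : ℝ :=
  (4 * π * t) ^ (-(1 : ℝ) / 2) * exp (-s ^ 2 / (4 * t))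

theorem heatKernelReal_nonneg {t : ℝ} (ht : 0 ≤ t) (s : ℝ) : 0 ≤ heatKernelReal t s := by
  unfold heatKernelReal
  positivity

theorem integral_comp_add_eq_of_norm_eq {E G : Type*} [NormedAddCommGroup E]
    [InnerProductSpace ℝ E] [FiniteDimensional ℝ E] [MeasurableSpace E] [BorelSpace E]
    [NormedAddCommGroup G] [NormedSpace ℝ G] (F : E → E → G)
    (hF : ∀ (R : E ≃ₗᵢ[ℝ] E) x y, F (R x) (R y) = F x y) {h h' : E} (hh : ‖h‖ = ‖h'‖) :
    ∫ x, F (x + h) x = ∫ x, F (x + h') x := by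
  set R := Submodule.reflection (ℝ ∙ (h - h'))ᗮ
  have hR : R h = h' := Submodule.reflection_sub hh
  rw [← R.measurePreserving.integral_comp R.toHomeomorph.measurableEmbedding
    (fun x => F (x + h') x)]
  simp only [← hR, ← map_add, hF]

theorem EuclideanSpace.integral_prod_eq_prod {ι 𝕜 : Type*} [Fintype ι] [RCLike 𝕜]
    (f : ι → ℝ → 𝕜) :
    ∫ x : EuclideanSpace ℝ ι, ∏ i, f i (x i) = ∏ i, ∫ s, f i s := by
  rw [← (EuclideanSpace.volume_preserving_symm_measurableEquiv_toLp ι).symm.integral_comp']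
  exact integral_fintype_prod_volume_eq_prod f

theorem heatKernel_eq_prod {m : ℕ} {t : ℝ} (ht : 0 ≤ t) (x : EuclideanSpace ℝ (Fin m)) :
    heatKernel m t x = ∏ i, heatKernelReal t (x i) := by
  have h4t : 0 ≤ 4 * π * t := by positivity
  simp only [heatKernel, heatKernelReal, Finset.prod_mul_distrib, Finset.prod_const,
    Finset.card_univ, Fintype.card_fin, ← exp_sum, EuclideanSpace.norm_sq_eq]
  congr 1
  · rw [← rpow_natCast, ← rpow_mul h4t]
    ring_nf
  · simp [neg_div, Finset.sum_div]

theorem abs_heatKernel_add_single_sub_eq_prod {m : ℕ} {t : ℝ} (ht : 0 ≤ t) (i : Fin m) (a : ℝ)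
    (y : EuclideanSpace ℝ (Fin m)) :
    |heatKernel m t (y + EuclideanSpace.single i a) - heatKernel m t y| =
      ∏ j, Function.update (fun _ => heatKernelReal t)
        i (fun s => |heatKernelReal t (s + a) - heatKernelReal t s|) j (y j) := by
  set P := ∏ j ∈ Finset.univ.erase i, heatKernelReal t (y j)
  have hP : 0 ≤ P := Finset.prod_nonneg fun j _ => heatKernelReal_nonneg ht _
  have hsplit (f : Fin m → ℝ) : ∏ j, f j = f i * ∏ j ∈ Finset.univ.erase i, f j :=
    (Finset.mul_prod_erase _ f (Finset.mem_univ i)).symm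
  have hshift :
      heatKernel m t (y + EuclideanSpace.single i a) = heatKernelReal t (y i + a) * P := by
    rw [heatKernel_eq_prod ht, hsplit]
    congr 1
    · simp
    · refine Finset.prod_congr rfl fun j hj => ?_
      simp [Finset.ne_of_mem_erase hj]
  have hupdate : ∏ j, Function.update (fun _ => heatKernelReal t)
      i (fun s => |heatKernelReal t (s + a) - heatKernelReal t s|) j (y j) =
      |heatKernelReal t (y i + a) - heatKernelReal t (y i)| * P := by
    rw [hsplit]
    congr 1
    · simp
    · refine Finset.prod_congr rfl fun j hj => ?_
      simp [Finset.ne_of_mem_erase hj]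
  rw [hshift, heatKernel_eq_prod ht y, hsplit, hupdate, ← sub_mul, abs_mul, abs_of_nonneg hP]

theorem two_mul_sqrt_mul_rpow_four_pi_mul {t : ℝ} (ht : 0 < t) :
    2 * √t * (4 * π * t) ^ (-(1 : ℝ) / 2) = π ^ (-(1 : ℝ) / 2) := by
  have h4 : √(4 * π * t) = 2 * √π * √t := by
    rw [sqrt_mul (by positivity), sqrt_mul (by norm_num), show (4 : ℝ) = 2 ^ 2 by norm_num,
      sqrt_sq (by norm_num)]
  rw [neg_div, rpow_neg (by positivity), rpow_neg pi_pos.le, ← sqrt_eq_rpow, ← sqrt_eq_rpow, h4]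
  have := sqrt_pos.2 ht
  field_simp

theorem heatKernelReal_two_mul_sqrt_mul {t : ℝ} (ht : 0 < t) (u : ℝ) :
    heatKernelReal t (2 * √t * u) = (4 * π * t) ^ (-(1 : ℝ) / 2) * exp (-u ^ 2) := by
  unfold heatKernelReal
  rw [mul_pow, mul_pow, sq_sqrt ht.le]
  congr 2
  field_simp
  ring

theorem integral_eq_mul_integral_comp_mul {E : Type*} [NormedAddCommGroup E] [NormedSpace ℝ E]
    {c : ℝ} (hc : 0 < c) (g : ℝ → E) :
    ∫ x, g x = c • ∫ u, g (c * u) := by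
  rw [Measure.integral_comp_mul_left, abs_of_pos (inv_pos.2 hc), smul_inv_smul₀ hc.ne']

theorem integral_heatKernelReal {t : ℝ} (ht : 0 < t) : ∫ s, heatKernelReal t s = 1 := by
  rw [integral_eq_mul_integral_comp_mul (by positivity : 0 < 2 * √t), smul_eq_mul]
  simp_rw [heatKernelReal_two_mul_sqrt_mul ht]
  rw [integral_const_mul, ← mul_assoc, two_mul_sqrt_mul_rpow_four_pi_mul ht]
  have := integral_gaussian 1
  simp only [neg_mul, one_mul, div_one] at this
  rw [this, sqrt_eq_rpow, ← rpow_add pi_pos]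
  norm_num

theorem integral_abs_heatKernelReal_add_sub {t : ℝ} (ht : 0 < t) (a : ℝ) :
    ∫ s, |heatKernelReal t (s + a) - heatKernelReal t s| =
      π ^ (-(1 : ℝ) / 2) * ∫ u, |exp (-(u + a / (2 * √t) / 2) ^ 2) -
        exp (-(u - a / (2 * √t) / 2) ^ 2)| := by
  set w := a / (2 * √t)
  have hw : 2 * √t * w = a := mul_div_cancel₀ a (by positivity)
  have hshift (u : ℝ) : 2 * √t * (u - w / 2) + a = 2 * √t * (u + w / 2) := by
    rw [← hw]; ring
  rw [integral_eq_mul_integral_comp_mul (by positivity : 0 < 2 * √t), smul_eq_mul,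
    ← integral_sub_right_eq_self _ (w / 2)]
  simp_rw [hshift, heatKernelReal_two_mul_sqrt_mul ht, ← mul_sub, abs_mul,
    abs_of_nonneg (rpow_nonneg (by positivity : (0 : ℝ) ≤ 4 * π * t) _)]
  rw [integral_const_mul, ← mul_assoc, two_mul_sqrt_mul_rpow_four_pi_mul ht]

theorem integral_abs_heatKernel_add_single_sub {m : ℕ} {t : ℝ} (ht : 0 < t) (i : Fin m)
    (a : ℝ) :
    ∫ y, |heatKernel m t (y + EuclideanSpace.single i a) - heatKernel m t y| =
      ∫ s, |heatKernelReal t (s + a) - heatKernelReal t s| := by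
  simp_rw [abs_heatKernel_add_single_sub_eq_prod ht.le, EuclideanSpace.integral_prod_eq_prod,
    ← Finset.mul_prod_erase _ _ (Finset.mem_univ i), Function.update_self]
  rw [Finset.prod_eq_one fun j hj => ?_, mul_one]
  rw [Function.update_of_ne (Finset.ne_of_mem_erase hj), integral_heatKernelReal ht]

/-- for `m ≥ 1`, `t > 0`, `h ∈ ℝ^m` and `w = |h|/(2√t)`,
`∫ |K_t(x+h) - K_t(x)| dx = π^{-1/2} ∫_ℝ |e^{-(s+w/2)²} - e^{-(s-w/2)²}| ds`. -/
theorem stmt15 (m : ℕ) (hm : 1 ≤ m) (t : ℝ) (ht : 0 < t)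
    (h : EuclideanSpace ℝ (Fin m)) :
    (∫ x : EuclideanSpace ℝ (Fin m), |heatKernel m t (x + h) - heatKernel m t x|)
      = Real.pi ^ (-(1 : ℝ) / 2) *
        ∫ s : ℝ, |Real.exp (-(s + (‖h‖ / (2 * Real.sqrt t)) / 2) ^ 2) -
          Real.exp (-(s - (‖h‖ / (2 * Real.sqrt t)) / 2) ^ 2)| := by
  let e : EuclideanSpace ℝ (Fin m) := EuclideanSpace.single ⟨0, hm⟩ ‖h‖
  have he : ‖h‖ = ‖e‖ := by simp [e]
  calc (∫ x, |heatKernel m t (x + h) - heatKernel m t x|)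
      = ∫ x, |heatKernel m t (x + e) - heatKernel m t x| :=
        integral_comp_add_eq_of_norm_eq (fun u v => |heatKernel m t u - heatKernel m t v|)
          (fun R x y => by simp only [heatKernel, LinearIsometryEquiv.norm_map]) he
    _ = ∫ s, |heatKernelReal t (s + ‖h‖) - heatKernelReal t s| :=
        integral_abs_heatKernel_add_single_sub ht _ _
    _ = _ := integral_abs_heatKernelReal_add_sub ht _
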